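/- Let c, c' ∈ ℤ^k with S̃_c ≠ ∅ and S̃_{c'} ≠ ∅, and suppose J_c ⊆ J_{c'}. Then the minimal face of Z containing π(c') is contained in the minimal face of Z containterminal π(c); i.e., the assignment of minimal faces is inclusion-reversing with respect to the sets J. -/

import Mathlib

/-- The linear map `φ : ℝⁿ → ℝᵏ` given by pairing with the integer vectors `v j`. -/
noncomputable def phiMap {n k : ℕ} (v : Fin k → Fin n → ℤ) :
    (Fin n → ℝ) →ₗ[ℝ] (Fin k → ℝ) where
  toFun u := fun j => ∑ i, u i * (v j i : ℝ)
  map_add' u w := by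
    funext j
    simp [add_mul, Finset.sum_add_distrib]
  map_smul' r u := by
    funext j
    simp [Finset.mul_sum, mul_assoc]

/-- The map `Φ : ℝⁿ → ℤᵏ`, `Φ(u)_j = ⌈⟨u, v_j⟩⌉`. -/
noncomputable def PhiMap {n k : ℕ} (v : Fin k → Fin n → ℤ) (u : Fin n → ℝ) : Fin k → ℤ :=
  fun j => ⌈∑ i, u i * (v j i : ℝ)⌉

/-- The set `J_c` of indices `j` such that `⟨y, v_j⟩ ∈ ℤ` for every `y` in the lifted stratum
`S̃_c`. -/
noncomputable def Jset {n k : ℕ} (v : Fin k → Fin n → ℤ) (c : Fin k → ℤ) : Set (Fin k) :=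
  {j | ∀ y ∈ {y : Fin n → ℝ | PhiMap v y = c}, ∃ m : ℤ, phiMap v y j = (m : ℝ)}

/-- The minimal face of a set `C` containing `p`: the intersection of all extreme subsets of `C`
containing `p`. -/
def minFace {V : Type*} [AddCommGroup V] [Module ℝ V] (C : Set V) (p : V) : Set V :=
  ⋂₀ {F : Set V | IsExtreme ℝ C F ∧ p ∈ F}

/-!
Pick `y ∈ S̃_c` with `⟨y, v_j⟩ < c_j` for every `j ∉ J_c`; it exists because `S̃_c` is convex, so
midpoints of witnesses for the individual `j` are witnesses for all of them. For any `y' ∈ S̃_{c'}`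
the vectors `a = c - φ(y)` and `b = c' - φ(y')` lie in `[0,1)^k` and represent `π(c)` and `π(c')`.
If `b_j > 0` then `j ∉ J_{c'} ⊇ J_c`, so `a_j > 0`; hence moving from `b` through `a` a little beyond
`a` stays in the box, i.e. `a` lies in an open segment from `b` to a point of the box. Projecting,
`π(c)` lies in an open segment of `Z` starting at `π(c')`, so every face containing `π(c)`
contains `π(c')`.
-/

lemma minFace_subset_of_mem {V : Type*} [AddCommGroup V] [Module ℝ V] {C : Set V} {p q : V}
    (hq : q ∈ minFace C p) : minFace C q ⊆ minFace C p :=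
  fun _ hx F hF => hx F ⟨hF.1, hq F hF⟩

lemma left_mem_minFace_of_mem_openSegment {V : Type*} [AddCommGroup V] [Module ℝ V] {C : Set V}
    {p x y : V} (hx : x ∈ C) (hy : y ∈ C) (hp : p ∈ openSegment ℝ x y) : x ∈ minFace C p :=
  fun _ ⟨hF, hpF⟩ => hF.left_mem_of_mem_openSegment hx hy hpF hp

lemma Finset.exists_mem_forall_lt_of_convexOn {E ι : Type*} [AddCommGroup E] [Module ℝ E]
    {S : Set E} (hS : S.Nonempty) (s : Finset ι) {f : ι → E → ℝ} {c : ι → ℝ}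
    (hf : ∀ i ∈ s, ConvexOn ℝ S (f i)) (hle : ∀ i ∈ s, ∀ x ∈ S, f i x ≤ c i)
    (hlt : ∀ i ∈ s, ∃ x ∈ S, f i x < c i) : ∃ x ∈ S, ∀ i ∈ s, f i x < c i := by
  classical
  induction s using Finset.induction_on with
  | empty => exact hS.imp fun x hx => ⟨hx, by simp⟩
  | insert i₀ s _ ih =>
    obtain ⟨x, hxS, hx⟩ := ih (fun i hi => hf i (mem_insert_of_mem hi))
      (fun i hi => hle i (mem_insert_of_mem hi)) (fun i hi => hlt i (mem_insert_of_mem hi))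
    obtain ⟨z, hzS, hz⟩ := hlt i₀ (mem_insert_self _ _)
    have hhalf : (0 : ℝ) ≤ 1 / 2 := by norm_num
    have hsum : (1 / 2 : ℝ) + 1 / 2 = 1 := add_halves 1
    have hmid : ∀ i ∈ insert i₀ s, f i ((1 / 2 : ℝ) • x + (1 / 2 : ℝ) • z) ≤ (f i x + f i z) / 2 :=
      fun i hi => by
        have := (hf i hi).2 hxS hzS hhalf hhalf hsum
        simp only [smul_eq_mul] at this
        linarith
    refine ⟨_, (hf i₀ (mem_insert_self _ _)).1 hxS hzS hhalf hhalf hsum, fun i hi => ?_⟩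
    have hxi := hle i hi x hxS
    have hzi := hle i hi z hzS
    rcases mem_insert.1 hi with rfl | hi'
    · linarith [hmid i hi]
    · linarith [hmid i hi, hx i hi']

open Filter Topology in
lemma exists_mem_openSegment_of_pos_imp_pos {ι : Type*} [Finite ι] {a b : ι → ℝ}
    (ha : ∀ j, a j ∈ Set.Ico (0 : ℝ) 1) (hb : ∀ j, b j ∈ Set.Ico (0 : ℝ) 1)
    (hba : ∀ j, 0 < b j → 0 < a j) :
    ∃ d : ι → ℝ, (∀ j, d j ∈ Set.Ico (0 : ℝ) 1) ∧ a ∈ openSegment ℝ b d := by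
  -- push `a` slightly further away from `b`: `a` then lies between `b` and `a + s • (a - b)`
  have hev : ∀ j, ∀ᶠ s in 𝓝[>] (0 : ℝ), a j + s * (a j - b j) ∈ Set.Ico (0 : ℝ) 1 := by
    intro j
    have hlim : Tendsto (fun s : ℝ => a j + s * (a j - b j)) (𝓝[>] 0) (𝓝 (a j)) :=
      tendsto_nhdsWithin_of_tendsto_nhds <| by
        simpa using ((continuous_id.mul continuous_const).const_add (a j)).tendsto (0 : ℝ)
    have hnonneg : ∀ᶠ s in 𝓝[>] (0 : ℝ), 0 ≤ a j + s * (a j - b j) := by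
      rcases (hb j).1.eq_or_lt with hbj | hbj
      · filter_upwards [self_mem_nhdsWithin] with s (hs : 0 < s)
        rw [← hbj]
        nlinarith [(ha j).1]
      · exact hlim.eventually_const_le (hba j hbj)
    exact hnonneg.and (hlim.eventually_lt_const (ha j).2)
  obtain ⟨s, hs, hs0 : 0 < s⟩ := ((eventually_all.2 hev).and self_mem_nhdsWithin).exists
  refine ⟨a + s • (a - b), hs, s / (1 + s), 1 / (1 + s), by positivity, by positivity,
    by field_simp; ring, ?_⟩
  ext j
  simp only [Pi.add_apply, Pi.smul_apply, Pi.sub_apply, smul_eq_mul]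
  field_simp
  ring

lemma LinearMap.range_mkQ_sub_apply {R M N : Type*} [Ring R] [AddCommGroup M] [Module R M]
    [AddCommGroup N] [Module R N] (f : M →ₗ[R] N) (x : N) (y : M) :
    (LinearMap.range f).mkQ (x - f y) = (LinearMap.range f).mkQ x := by
  rw [map_sub, sub_eq_self, Submodule.mkQ_apply, Submodule.Quotient.mk_eq_zero]
  exact LinearMap.mem_range_self f y

section Stratum

variable {n k : ℕ} {v : Fin k → Fin n → ℤ} {c : Fin k → ℤ} {y : Fin n → ℝ}

lemma PhiMap_eq_iff :
    PhiMap v y = c ↔ ∀ j, phiMap v y j ∈ Set.Ioc ((c j : ℝ) - 1) (c j) := by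
  simp only [funext_iff, PhiMap, Int.ceil_eq_iff]
  rfl

lemma convex_setOf_PhiMap_eq : Convex ℝ {y : Fin n → ℝ | PhiMap v y = c} := by
  simp_rw [PhiMap_eq_iff, Set.ofPred_forall]
  exact convex_iInter fun j =>
    (convex_Ioc _ _).linear_preimage ((LinearMap.proj j).comp (phiMap v))

lemma sub_phiMap_mem_Ico (hy : PhiMap v y = c) (j : Fin k) :
    (c j : ℝ) - phiMap v y j ∈ Set.Ico (0 : ℝ) 1 := by
  obtain ⟨hlt, hle⟩ := PhiMap_eq_iff.1 hy j
  constructor <;> linarith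

lemma phiMap_eq_of_mem_Jset {j : Fin k} (hj : j ∈ Jset v c) (hy : PhiMap v y = c) :
    phiMap v y j = c j := by
  obtain ⟨m, hm⟩ := hj y hy
  have hceil : ⌈phiMap v y j⌉ = c j := congrFun hy j
  rw [hm, Int.ceil_intCast] at hceil
  rw [hm, hceil]

lemma exists_phiMap_lt_of_notMem_Jset {j : Fin k} (hj : j ∉ Jset v c) :
    ∃ y ∈ {y : Fin n → ℝ | PhiMap v y = c}, phiMap v y j < c j := by
  simp only [Jset, Set.mem_ofPred_eq, not_forall] at hj
  obtain ⟨y, hy, hint⟩ := hj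
  exact ⟨y, hy, ((PhiMap_eq_iff.1 hy j).2).lt_of_ne fun h => hint ⟨c j, h⟩⟩

lemma exists_PhiMap_eq_forall_notMem_Jset_lt (hc : {y : Fin n → ℝ | PhiMap v y = c}.Nonempty) :
    ∃ y, PhiMap v y = c ∧ ∀ j ∉ Jset v c, phiMap v y j < c j := by
  classical
  obtain ⟨y, hy, hlt⟩ := Finset.exists_mem_forall_lt_of_convexOn hc {j | j ∉ Jset v c}
    (f := fun j y => phiMap v y j) (c := fun j => (c j : ℝ))
    (fun j _ => ((LinearMap.proj j).comp (phiMap v)).convexOn convex_setOf_PhiMap_eq)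
    (fun j _ y hy => (PhiMap_eq_iff.1 hy j).2)
    (fun j hj => exists_phiMap_lt_of_notMem_Jset (Finset.mem_filter.1 hj).2)
  exact ⟨y, hy, fun j hj => hlt j (Finset.mem_filter.2 ⟨Finset.mem_univ j, hj⟩)⟩

end Stratum

/-- The assignment of minimal faces is inclusion-reversing with respect to the sets `J`: if
`J_c ⊆ J_{c'}`, then the minimal face of `Z` containing `π(c')` is contained in the minimal face
of `Z` containing `π(c)`. -/
theorem stmt10 {n k : ℕ} (v : Fin k → Fin n → ℤ) (c c' : Fin k → ℤ)
    (hc : ({y : Fin n → ℝ | PhiMap v y = c}).Nonempty)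
    (hc' : ({y : Fin n → ℝ | PhiMap v y = c'}).Nonempty)
    (hJ : Jset v c ⊆ Jset v c') :
    minFace ((LinearMap.range (phiMap v)).mkQ '' {x : Fin k → ℝ | ∀ j, x j ∈ Set.Ico (0 : ℝ) 1})
        ((LinearMap.range (phiMap v)).mkQ (fun j => (c' j : ℝ))) ⊆
      minFace ((LinearMap.range (phiMap v)).mkQ '' {x : Fin k → ℝ | ∀ j, x j ∈ Set.Ico (0 : ℝ) 1})
        ((LinearMap.range (phiMap v)).mkQ (fun j => (c j : ℝ))) := by
  obtain ⟨y, hy, hy_lt⟩ := exists_PhiMap_eq_forall_notMem_Jset_lt hc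
  obtain ⟨y', hy'⟩ := hc'
  have hsupp : ∀ j, 0 < (c' j : ℝ) - phiMap v y' j → 0 < (c j : ℝ) - phiMap v y j :=
    fun j hj => sub_pos.2 <| hy_lt j fun hjc =>
      hj.ne' <| sub_eq_zero.2 (phiMap_eq_of_mem_Jset (hJ hjc) hy').symm
  obtain ⟨d, hd, hseg⟩ :=
    exists_mem_openSegment_of_pos_imp_pos (sub_phiMap_mem_Ico hy) (sub_phiMap_mem_Ico hy') hsupp
  rw [← LinearMap.range_mkQ_sub_apply _ (fun j => (c j : ℝ)) y,
    ← LinearMap.range_mkQ_sub_apply _ (fun j => (c' j : ℝ)) y']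
  refine minFace_subset_of_mem <| left_mem_minFace_of_mem_openSegment
    ⟨_, sub_phiMap_mem_Ico hy', rfl⟩ ⟨d, hd, rfl⟩ ?_
  exact image_openSegment ℝ (LinearMap.range (phiMap v)).mkQ.toAffineMap _ _ ▸
    Set.mem_image_of_mem _ hseg
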